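/- Every automorphism φ of F₂ such that φ(a) and φ(b) are positive words and φ(κ) is conjugate in F₂ to κ can be written as φ = c_g ∘ ψ, where ψ is a finite composition of copies of T̂₁ and T̂₂ and c_g is the inner automorphism x ↦ g·x·g⁻¹ for some element g of F₂. -/

import Mathlib

/-- The free group on two generators. -/
abbrev F2 := FreeGroup (Fin 2)

/-- The first generator `a` of `F₂`. -/
def a : F2 := FreeGroup.of 0

/-- The second generator `b` of `F₂`. -/
def b : F2 := FreeGroup.of 1

/-- The commutator `κ = a·b·a⁻¹·b⁻¹`. -/
def kappa : F2 := a * b * a⁻¹ * b⁻¹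

/-- An element of `F₂` is a positive word if it lies in the submonoid generated by the
generators `a` and `b`. -/
def IsPositiveWord (x : F2) : Prop := x ∈ Submonoid.closure ({a, b} : Set F2)

/-- The endomorphism `T̂₁` of `F₂` determined by `a ↦ a·b`, `b ↦ b`. -/
def T1hat : Monoid.End F2 := FreeGroup.lift fun i => if i = 0 then a * b else b

/-- The endomorphism `T̂₂` of `F₂` determined by `a ↦ a`, `b ↦ b·a`. -/
def T2hat : Monoid.End F2 := FreeGroup.lift fun i => if i = 0 then a else b * a

/-!
Write `φ a` and `φ b` as positive words `u` and `v`. If one of them is a prefix or a suffix of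
the other, say `u = u'v` or `u = vu'`, then `[u, v]` equals `[u', v]`, resp. is its conjugate by
`v`; by induction on `|u| + |v|` the pair `(u', v)` is the image of `(a, b)` under some `c_g ∘ ψ`,
and one more `T̂₁` (followed by conjugation by `v` in the prefix case) yields `(u, v)`; the
cases where `u` is a prefix or a suffix of `v` are symmetric, with `T̂₂`.

Otherwise `u = p x₁ ⋯ = ⋯ x₂ s` and `v = p y₁ ⋯ = ⋯ y₂ s` with `x₁ ≠ y₁` and `x₂ ≠ y₂`, and
conjugating `[u, v]` by `p` gives a cyclically reduced word made of positive letters followed by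
negative ones. Cyclically reduced conjugate words in a free group are cyclic rotations of each
other, and the only rotation of `a b a⁻¹ b⁻¹` with that sign pattern is itself, which forces
`u = a` and `v = b`.
-/

open scoped commutatorElement

theorem List.prefix_or_prefix_or_exists_ne {α : Type*} :
    ∀ l₁ l₂ : List α, l₁ <+: l₂ ∨ l₂ <+: l₁ ∨
      ∃ p x y t₁ t₂, x ≠ y ∧ l₁ = p ++ x :: t₁ ∧ l₂ = p ++ y :: t₂
  | [], _ => .inl List.nil_prefix
  | _ :: _, [] => .inr (.inl List.nil_prefix)
  | x :: t₁, y :: t₂ => by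
    by_cases hxy : x = y
    · subst hxy
      rcases List.prefix_or_prefix_or_exists_ne t₁ t₂ with
        h | h | ⟨p, x', y', t₁', t₂', hne, rfl, rfl⟩
      · exact .inl (List.cons_prefix_cons.mpr ⟨rfl, h⟩)
      · exact .inr (.inl (List.cons_prefix_cons.mpr ⟨rfl, h⟩))
      · exact .inr (.inr ⟨x :: p, x', y', t₁', t₂', hne, rfl, rfl⟩)
    · exact .inr (.inr ⟨[], x, y, t₁, t₂, hxy, rfl, rfl⟩)

theorem List.suffix_or_suffix_or_exists_ne {α : Type*} (l₁ l₂ : List α) :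
    l₁ <:+ l₂ ∨ l₂ <:+ l₁ ∨
      ∃ s x y t₁ t₂, x ≠ y ∧ l₁ = t₁ ++ [x] ++ s ∧ l₂ = t₂ ++ [y] ++ s := by
  rcases List.prefix_or_prefix_or_exists_ne l₁.reverse l₂.reverse with
    h | h | ⟨p, x, y, t₁, t₂, hne, h₁, h₂⟩
  · exact .inl (List.reverse_prefix.mp h)
  · exact .inr (.inl (List.reverse_prefix.mp h))
  · refine .inr (.inr ⟨p.reverse, x, y, t₁.reverse, t₂.reverse, hne, ?_, ?_⟩)
    · simpa using congrArg List.reverse h₁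
    · simpa using congrArg List.reverse h₂

theorem commutatorElement_eq_conj_of_eq_mul {G : Type*} [Group G] {u v p s u₁ v₁ u₂ v₂ : G}
    (hu₁ : u = p * u₁) (hv₁ : v = p * v₁) (hu₂ : u = u₂ * s) (hv₂ : v = v₂ * s) :
    ⁅u, v⁆ = p * (u₁ * v₂ * (v₁ * u₂)⁻¹) * p⁻¹ :=
  calc ⁅u, v⁆ = u * v * u⁻¹ * v⁻¹ := commutatorElement_def u v
    _ = (p * u₁) * (v₂ * s) * (u₂ * s)⁻¹ * (p * v₁)⁻¹ := by rw [← hu₁, ← hv₁, ← hu₂, ← hv₂]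
    _ = p * (u₁ * v₂ * (v₁ * u₂)⁻¹) * p⁻¹ := by group

namespace FreeGroup

variable {α : Type*} {L L₁ L₂ : List (α × Bool)}

theorem invRev_cons' (p : α × Bool) (L : List (α × Bool)) :
    invRev (p :: L) = invRev L ++ [(p.1, !p.2)] :=
  invRev_cons

theorem mk_cons (p : α × Bool) (L : List (α × Bool)) : mk (p :: L) = mk [p] * mk L := by
  rw [mul_mk]; rfl

theorem mk_singleton_inv (p : α × Bool) : mk [(p.1, !p.2)] = (mk [p])⁻¹ := by
  rw [inv_mk]; rfl

theorem isReduced_of_forall_snd_eq (β : Bool) (h : ∀ q ∈ L, q.2 = β) : IsReduced L :=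
  List.Pairwise.isChain <| List.pairwise_of_forall_mem_list fun _ hp _ hq _ =>
    (h _ hp).trans (h _ hq).symm

theorem IsReduced.cons_append_inv {p : α × Bool} (hL : IsReduced L) (hne : L ≠ [])
    (hhead : ∀ q ∈ L.head?, q ≠ (p.1, !p.2)) (hlast : ∀ q ∈ L.getLast?, q ≠ p) :
    IsReduced (p :: L ++ [(p.1, !p.2)]) := by
  obtain ⟨x, β⟩ := p
  rw [IsReduced, List.cons_append, List.isChain_cons, List.isChain_append]
  refine ⟨?_, hL, List.isChain_singleton _, ?_⟩
  · rw [List.head?_append_of_ne_nil _ hne]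
    rintro ⟨y, γ⟩ hy rfl
    have := hhead _ hy
    cases β <;> cases γ <;> simp_all
  · rintro ⟨z, γ⟩ hz _ hw rfl
    simp only [List.head?_cons, Option.mem_def, Option.some_inj] at hw
    subst hw
    have := hlast _ hz
    cases β <;> cases γ <;> simp_all

theorem IsCyclicallyReduced.append_comm (h : IsCyclicallyReduced (L₁ ++ L₂)) :
    IsCyclicallyReduced (L₂ ++ L₁) := by
  rcases eq_or_ne L₁ [] with rfl | h₁
  · simpa using h
  rcases eq_or_ne L₂ [] with rfl | h₂
  · simpa using h
  obtain ⟨hred, hcyc⟩ := h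
  rw [IsReduced, List.isChain_append] at hred
  rw [List.getLast?_append_of_ne_nil _ h₂, List.head?_append_of_ne_nil _ h₁] at hcyc
  refine ⟨List.isChain_append.mpr ⟨hred.2.1, hred.1, hcyc⟩, ?_⟩
  rw [List.getLast?_append_of_ne_nil _ h₁, List.head?_append_of_ne_nil _ h₂]
  exact hred.2.2

theorem IsCyclicallyReduced.of_isRotated (h : IsCyclicallyReduced L₁) (hr : L₁ ~r L₂) :
    IsCyclicallyReduced L₂ := by
  obtain ⟨n, rfl⟩ := hr
  rw [List.rotate_eq_drop_append_take_mod]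
  rw [← List.take_append_drop (n % L₁.length) L₁] at h
  exact h.append_comm

theorem IsCyclicallyReduced.eq_nil_of_append_invRev {t ρ : List (α × Bool)}
    (h : IsCyclicallyReduced (t ++ ρ ++ invRev t)) : t = [] := by
  rcases t with _ | ⟨q, t⟩
  · rfl
  have hlast : (q :: t ++ ρ ++ invRev (q :: t)).getLast? = some (q.1, !q.2) := by
    rw [invRev_cons', ← List.append_assoc, List.getLast?_concat]
  have := h.2 _ hlast q rfl rfl
  simp at this

theorem isCyclicallyReduced_map_append_invRev_map {x₁ y₁ x₂ y₂ : α} (P Q : List α)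
    (h₁ : x₁ ≠ y₁) (h₂ : x₂ ≠ y₂) :
    IsCyclicallyReduced ((x₁ :: P ++ [y₂]).map (·, true) ++
      invRev ((y₁ :: Q ++ [x₂]).map (·, true))) := by
  refine ⟨List.IsChain.append (isReduced_of_forall_snd_eq true (by simp))
    (isReduced_of_forall_snd_eq false (by simp [invRev])) ?_, ?_⟩
  · simp [invRev, List.getLast?_cons, List.getLast?_append, h₂.symm]
  · simp [invRev, List.getLast?_cons, List.getLast?_append, h₁.symm]

def HasRotatedConjWord (w : List (α × Bool)) (x : FreeGroup α) : Prop :=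
  ∃ t ρ, ρ ~r w ∧ IsReduced (t ++ ρ ++ invRev t) ∧ mk (t ++ ρ ++ invRev t) = x

theorem HasRotatedConjWord.of_isRotated {w w' : List (α × Bool)} {x : FreeGroup α}
    (h : HasRotatedConjWord w x) (hw : w ~r w') : HasRotatedConjWord w' x :=
  let ⟨t, ρ, hρ, hred, hx⟩ := h
  ⟨t, ρ, hρ.trans hw, hred, hx⟩

theorem IsCyclicallyReduced.hasRotatedConjWord_conj_letter {ρ : List (α × Bool)}
    (hρ : IsCyclicallyReduced ρ) (hne : ρ ≠ []) (p : α × Bool) :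
    HasRotatedConjWord ρ (mk [p] * mk ρ * (mk [p])⁻¹) := by
  obtain ⟨q, ρ₁, rfl⟩ := List.exists_cons_of_ne_nil hne
  by_cases hq : q = (p.1, !p.2)
  · subst hq
    refine ⟨[], ρ₁ ++ [(p.1, !p.2)], List.isRotated_concat _ _, ?_, ?_⟩
    · simpa using (hρ.of_isRotated (List.isRotated_concat _ _).symm).isReduced
    · simp only [List.nil_append, invRev_empty, List.append_nil, ← mul_mk, mk_singleton_inv]
      rw [mk_cons _ ρ₁, mk_singleton_inv]
      group
  obtain ⟨ρ₂, r, hr⟩ : ∃ ρ₂ r, q :: ρ₁ = ρ₂ ++ [r] :=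
    ⟨_, _, (List.dropLast_append_getLast (List.cons_ne_nil _ _)).symm⟩
  rw [hr] at hρ hne ⊢
  by_cases hrp : r = p
  · subst hrp
    refine ⟨[], r :: ρ₂, (List.isRotated_concat _ _).symm, ?_, ?_⟩
    · simpa using (hρ.of_isRotated (List.isRotated_concat _ _)).isReduced
    · simp only [List.nil_append, invRev_empty, List.append_nil, ← mul_mk]
      rw [mk_cons _ ρ₂]
      group
  · refine ⟨[p], ρ₂ ++ [r], List.IsRotated.refl _, ?_, ?_⟩
    · refine hρ.isReduced.cons_append_inv hne ?_ ?_
      · rw [← hr]; simpa using hq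
      · simpa using hrp
    · simp only [← mul_mk, ← inv_mk]

theorem HasRotatedConjWord.conj_letter {w : List (α × Bool)} {x : FreeGroup α}
    (hw : IsCyclicallyReduced w) (hne : w ≠ []) (h : HasRotatedConjWord w x) (p : α × Bool) :
    HasRotatedConjWord w (mk [p] * x * (mk [p])⁻¹) := by
  obtain ⟨t, ρ, hρw, hred, rfl⟩ := h
  rcases t with _ | ⟨q, t⟩
  · have hρne : ρ ≠ [] := fun h => hne (List.isRotated_nil_iff'.mp (h ▸ hρw)).symm
    simpa using ((hw.of_isRotated hρw.symm).hasRotatedConjWord_conj_letter hρne p).of_isRotated hρw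
  by_cases hq : q = (p.1, !p.2)
  · subst hq
    refine ⟨t, ρ, hρw, hred.infix ⟨[(p.1, !p.2)], [p], ?_⟩, ?_⟩
    · simp [invRev_cons']
    · simp only [← mul_mk, ← inv_mk]
      rw [mk_cons _ t, mk_singleton_inv]
      group
  · refine ⟨p :: q :: t, ρ, hρw, ?_, ?_⟩
    · have hlast : ∀ r ∈ (q :: t ++ ρ ++ invRev (q :: t)).getLast?, r ≠ p := by
        rw [invRev_cons', ← List.append_assoc, List.getLast?_concat]
        simp only [Option.mem_def, Option.some_inj]
        rintro _ rfl rfl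
        simp at hq
      have := hred.cons_append_inv (p := p) (by simp) (by simpa using hq) hlast
      simpa [invRev_cons'] using this
    · simp only [← mul_mk, ← inv_mk]
      rw [mk_cons p (q :: t)]
      group

theorem IsCyclicallyReduced.hasRotatedConjWord_conj {w : List (α × Bool)}
    (hw : IsCyclicallyReduced w) (g : FreeGroup α) : HasRotatedConjWord w (g * mk w * g⁻¹) := by
  rcases eq_or_ne w [] with rfl | hne
  · exact ⟨[], [], .refl _, by simp, by simp [← one_eq_mk]⟩
  induction g using Quot.inductionOn with
  | h L =>
    induction L with
    | nil => exact ⟨[], w, .refl _, by simpa using hw.isReduced, by simp [← one_eq_mk]⟩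
    | cons p L ih =>
      convert ih.conj_letter hw hne p using 1
      rw [quot_mk_eq_mk, quot_mk_eq_mk, mk_cons p L]
      group

theorem IsConj.toWord_isRotated [DecidableEq α] {x y : FreeGroup α}
    (hx : IsCyclicallyReduced x.toWord) (hy : IsCyclicallyReduced y.toWord) (h : IsConj x y) :
    y.toWord ~r x.toWord := by
  obtain ⟨g, rfl⟩ := isConj_iff.mp h
  obtain ⟨t, ρ, hρ, hred, heq⟩ := hx.hasRotatedConjWord_conj g
  rw [mk_toWord] at heq
  rw [← heq, toWord_mk, hred.reduce_eq] at hy ⊢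
  obtain rfl := hy.eq_nil_of_append_invRev
  simpa using hρ

def posWord (l : List α) : FreeGroup α := mk (l.map (·, true))

@[simp]
theorem posWord_nil : posWord ([] : List α) = 1 := rfl

theorem posWord_append (l₁ l₂ : List α) : posWord (l₁ ++ l₂) = posWord l₁ * posWord l₂ := by
  simp [posWord, mul_mk]

theorem exists_posWord_eq {x : FreeGroup α} (hx : x ∈ Submonoid.closure (Set.range of)) :
    ∃ l, posWord l = x := by
  induction hx using Submonoid.closure_induction with
  | mem _ h => obtain ⟨i, rfl⟩ := h; exact ⟨[i], rfl⟩
  | one => exact ⟨[], rfl⟩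
  | mul _ _ _ _ ihx ihy =>
    obtain ⟨l₁, rfl⟩ := ihx
    obtain ⟨l₂, rfl⟩ := ihy
    exact ⟨l₁ ++ l₂, posWord_append l₁ l₂⟩

end FreeGroup

open FreeGroup

theorem toWord_kappa : kappa.toWord = [(0, true), (1, true), (0, false), (1, false)] := rfl

theorem isCyclicallyReduced_toWord_kappa : IsCyclicallyReduced kappa.toWord := by
  rw [toWord_kappa]
  simp [isCyclicallyReduced_iff, FreeGroup.IsReduced]

theorem not_isConj_kappa_one : ¬IsConj kappa 1 := by
  rw [isConj_comm, isConj_one_right]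
  decide

theorem eq_zero_one_of_isConj_kappa_commutator {u v : List (Fin 2)}
    (hpre : ∃ p x₁ y₁ u₁ v₁, x₁ ≠ y₁ ∧ u = p ++ x₁ :: u₁ ∧ v = p ++ y₁ :: v₁)
    (hsuf : ∃ s x₂ y₂ u₂ v₂, x₂ ≠ y₂ ∧ u = u₂ ++ [x₂] ++ s ∧ v = v₂ ++ [y₂] ++ s)
    (h : IsConj kappa ⁅posWord u, posWord v⁆) : u = [0] ∧ v = [1] := by
  obtain ⟨p, x₁, y₁, u₁, v₁, h₁, hu₁, hv₁⟩ := hpre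
  obtain ⟨s, x₂, y₂, u₂, v₂, h₂, hu₂, hv₂⟩ := hsuf
  set W := (x₁ :: u₁ ++ v₂ ++ [y₂]).map (·, true) ++ invRev ((y₁ :: v₁ ++ u₂ ++ [x₂]).map (·, true))
  have hW : IsCyclicallyReduced W := isCyclicallyReduced_map_append_invRev_map _ _ h₁ h₂
  have hconj : IsConj kappa (mk W) := by
    refine h.trans (isConj_iff.mpr ⟨(posWord p)⁻¹, ?_⟩)
    rw [commutatorElement_eq_conj_of_eq_mul (by rw [hu₁, posWord_append])
      (by rw [hv₁, posWord_append]) (by rw [hu₂, posWord_append]) (by rw [hv₂, posWord_append])]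
    simp only [W, posWord, ← mul_mk, ← inv_mk, List.map_append]
    group
  have hrot : W ~r kappa.toWord := by
    have := hconj.toWord_isRotated isCyclicallyReduced_toWord_kappa
      (by rwa [toWord_mk, hW.isReduced.reduce_eq])
    rwa [toWord_mk, hW.isReduced.reduce_eq] at this
  have hlen : W.length = 4 := hrot.perm.length_eq
  simp only [W, List.length_append, List.length_map, invRev_length, List.length_cons,
    List.length_nil] at hlen
  obtain ⟨rfl, rfl, rfl, rfl⟩ : u₁ = [] ∧ v₂ = [] ∧ v₁ = [] ∧ u₂ = [] := by
    simp only [← List.length_eq_zero_iff]; omega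
  have hletters : ∀ x₁ y₂ x₂ y₁ : Fin 2,
      [(x₁, true), (y₂, true), (x₂, false), (y₁, false)] ~r kappa.toWord →
        x₁ = 0 ∧ y₂ = 1 ∧ x₂ = 0 ∧ y₁ = 1 := by decide
  obtain ⟨rfl, rfl, rfl, rfl⟩ := hletters _ _ _ _ (by simpa [W, invRev] using hrot)
  -- `u` starts with `0` and `v` with `1`, so their common prefix `p` is empty.
  cases p <;> simp_all

def tMonoid : Submonoid (Monoid.End F2) := Submonoid.closure {T1hat, T2hat}

def IsConjTImage (x y : F2) : Prop :=
  ∃ g : F2, ∃ ψ ∈ tMonoid, x = g * ψ a * g⁻¹ ∧ y = g * ψ b * g⁻¹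

theorem isConjTImage_a_b : IsConjTImage a b := ⟨1, 1, one_mem _, by simp, by simp⟩

namespace IsConjTImage

variable {x y : F2}

theorem conj (h : IsConjTImage x y) (c : F2) : IsConjTImage (c * x * c⁻¹) (c * y * c⁻¹) := by
  obtain ⟨g, ψ, hψ, rfl, rfl⟩ := h
  exact ⟨c * g, ψ, hψ, by group, by group⟩

theorem mul_right_fst (h : IsConjTImage x y) : IsConjTImage (x * y) y := by
  obtain ⟨g, ψ, hψ, rfl, rfl⟩ := h
  refine ⟨g, ψ * T1hat, mul_mem hψ (Submonoid.subset_closure (by simp)), ?_, rfl⟩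
  change _ = g * ψ (a * b) * g⁻¹
  rw [_root_.map_mul]
  group

theorem mul_right_snd (h : IsConjTImage x y) : IsConjTImage x (y * x) := by
  obtain ⟨g, ψ, hψ, rfl, rfl⟩ := h
  refine ⟨g, ψ * T2hat, mul_mem hψ (Submonoid.subset_closure (by simp)), rfl, ?_⟩
  change _ = g * ψ (b * a) * g⁻¹
  rw [_root_.map_mul]
  group

theorem mul_left_fst (h : IsConjTImage x y) : IsConjTImage (y * x) y := by
  convert h.mul_right_fst.conj y using 1 <;> group

theorem mul_left_snd (h : IsConjTImage x y) : IsConjTImage x (x * y) := by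
  convert h.mul_right_snd.conj x using 1 <;> group

end IsConjTImage

theorem isConjTImage_of_isConj_kappa (u v : List (Fin 2))
    (h : IsConj kappa ⁅posWord u, posWord v⁆) : IsConjTImage (posWord u) (posWord v) := by
  have hu : u ≠ [] := by
    rintro rfl
    exact not_isConj_kappa_one (by simpa [commutatorElement_def] using h)
  have hv : v ≠ [] := by
    rintro rfl
    exact not_isConj_kappa_one (by simpa [commutatorElement_def] using h)
  rcases List.prefix_or_prefix_or_exists_ne u v with ⟨v', rfl⟩ | ⟨u', rfl⟩ | hpre
  · rw [posWord_append] at h ⊢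
    refine (isConjTImage_of_isConj_kappa u v'
      (h.trans (isConj_iff.mpr ⟨(posWord u)⁻¹, ?_⟩))).mul_left_snd
    simp only [commutatorElement_def]; group
  · rw [posWord_append] at h ⊢
    refine (isConjTImage_of_isConj_kappa u' v
      (h.trans (isConj_iff.mpr ⟨(posWord v)⁻¹, ?_⟩))).mul_left_fst
    simp only [commutatorElement_def]; group
  rcases List.suffix_or_suffix_or_exists_ne u v with ⟨v', rfl⟩ | ⟨u', rfl⟩ | hsuf
  · rw [posWord_append] at h ⊢
    refine (isConjTImage_of_isConj_kappa u v' (h.trans (isConj_iff.mpr ⟨1, ?_⟩))).mul_right_snd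
    simp only [commutatorElement_def]; group
  · rw [posWord_append] at h ⊢
    refine (isConjTImage_of_isConj_kappa u' v (h.trans (isConj_iff.mpr ⟨1, ?_⟩))).mul_right_fst
    simp only [commutatorElement_def]; group
  obtain ⟨rfl, rfl⟩ := eq_zero_one_of_isConj_kappa_commutator hpre hsuf h
  exact isConjTImage_a_b
termination_by u.length + v.length
decreasing_by
  all_goals
    subst_vars
    simp only [List.length_append]
    grind [List.length_pos_iff]

theorem automorphism_positive_conjugating_kappa_eq_inner_comp_general
    (φ : Monoid.End F2)
    (ha : IsPositiveWord (φ a)) (hb : IsPositiveWord (φ b))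
    (hκ : ∃ h : F2, φ kappa = h * kappa * h⁻¹) :
    ∃ (g : F2) (L : List (Monoid.End F2)),
      (∀ ψ ∈ L, ψ = T1hat ∨ ψ = T2hat) ∧
      ∀ x : F2, φ x = g * (L.prod x) * g⁻¹ := by
  have hgens : ({a, b} : Set F2) ⊆ Set.range of := by rintro _ (rfl | rfl) <;> exact ⟨_, rfl⟩
  obtain ⟨u, hu⟩ := exists_posWord_eq (Submonoid.closure_mono hgens ha)
  obtain ⟨v, hv⟩ := exists_posWord_eq (Submonoid.closure_mono hgens hb)
  have hconj : IsConj kappa ⁅posWord u, posWord v⁆ := by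
    obtain ⟨h, hh⟩ := hκ
    rw [hu, hv, ← map_commutatorElement]
    exact isConj_iff.mpr ⟨h, hh.symm⟩
  obtain ⟨g, ψ, hψ, hψa, hψb⟩ := isConjTImage_of_isConj_kappa u v hconj
  obtain ⟨L, hL, rfl⟩ := Submonoid.exists_list_of_mem_closure hψ
  have hφ : (φ : F2 →* F2) = (MulAut.conj g).toMonoidHom.comp L.prod :=
    FreeGroup.ext_hom _ _ (Fin.forall_fin_two.mpr ⟨hu ▸ hψa, hv ▸ hψb⟩)
  exact ⟨g, L, fun ψ hψ => hL ψ hψ, fun x => DFunLike.congr_fun hφ x⟩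

/-- Every automorphism `φ` of `F₂` sending both generators to positive words and sending
the commutator `κ` to a conjugate of `κ` factors as `φ = c_g ∘ ψ`, where `ψ` is a finite
composition of copies of `T̂₁` and `T̂₂` and `c_g` is the inner automorphism
`x ↦ g·x·g⁻¹` for some `g ∈ F₂`. -/
theorem automorphism_positive_conjugating_kappa_eq_inner_comp
    (φ : Monoid.End F2) (hbij : Function.Bijective φ)
    (ha : IsPositiveWord (φ a)) (hb : IsPositiveWord (φ b))
    (hκ : ∃ h : F2, φ kappa = h * kappa * h⁻¹) :
    ∃ (g : F2) (L : List (Monoid.End F2)),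
      (∀ ψ ∈ L, ψ = T1hat ∨ ψ = T2hat) ∧
      ∀ x : F2, φ x = g * (L.prod x) * g⁻¹ :=
  automorphism_positive_conjugating_kappa_eq_inner_comp_general φ ha hb hκ
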